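/- Let Φ : H → ℝ be a convex continuous function on a finite-dimensional real Hilbert space H with minimum value 0 attained on a nonempty closed convex set Ω, and for ε > 0 let z_ε be the unique minimizer of Φ(z) + (ε/2)‖z‖². Then z_ε → z̄* as ε → 0⁺, where z̄* = Proj_Ω(0) is the minimal norm element of Ω. -/

import Mathlib

open Filter

theorem stmt_6 {H : Type*} [NormedAddCommGroup H] [InnerProductSpace ℝ H]
    [FiniteDimensional ℝ H]
    (Φ : H → ℝ) (hconv : ConvexOn ℝ Set.univ Φ) (hcont : Continuous Φ)
    (hnonneg : ∀ z, 0 ≤ Φ z)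
    (Ω : Set H) (hne : Ω.Nonempty) (hclosed : IsClosed Ω) (hΩconv : Convex ℝ Ω)
    (hΩ : Ω = {z | Φ z = 0})
    (zbar : H) (hzbar : zbar ∈ Ω) (hmin : ∀ w ∈ Ω, ‖zbar‖ ≤ ‖w‖)
    (z : ℝ → H)
    (hz : ∀ ε > 0, IsMinOn (fun w => Φ w + ε / 2 * ‖w‖ ^ 2) Set.univ (z ε)) :
    Tendsto z (nhdsWithin 0 (Set.Ioi 0)) (nhds zbar) := by
  have hΦzbar : Φ zbar = 0 := by
    have := hΩ ▸ hzbar; exact this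
  -- Basic comparison inequalities
  have hcomp : ∀ ε > 0, Φ (z ε) + ε / 2 * ‖z ε‖ ^ 2 ≤ ε / 2 * ‖zbar‖ ^ 2 := by
    intro ε hε
    have := isMinOn_iff.mp (hz ε hε) zbar (Set.mem_univ zbar)
    simpa [hΦzbar] using this
  have hnorm_le : ∀ ε > 0, ‖z ε‖ ≤ ‖zbar‖ := by
    intro ε hε
    have h1 := hcomp ε hε
    have h2 := hnonneg (z ε)
    have hsq : ‖z ε‖ ^ 2 ≤ ‖zbar‖ ^ 2 := by
      have h3 : ε / 2 * ‖z ε‖ ^ 2 ≤ ε / 2 * ‖zbar‖ ^ 2 := by linarith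
      have h4 : (0:ℝ) < ε / 2 := by linarith
      exact le_of_mul_le_mul_left h3 h4
    nlinarith [norm_nonneg (z ε), norm_nonneg zbar]
  have hΦ_le : ∀ ε > 0, Φ (z ε) ≤ ε / 2 * ‖zbar‖ ^ 2 := by
    intro ε hε
    have h1 := hcomp ε hε
    nlinarith [norm_nonneg (z ε), hε]
  by_contra hcon
  rw [Metric.tendsto_nhdsWithin_nhds] at hcon
  push_neg at hcon
  obtain ⟨δ, hδ, hbad⟩ := hcon
  -- choose a sequence ε_n → 0⁺ with dist (z ε_n) zbar ≥ δ
  have hseq : ∀ n : ℕ, ∃ x : ℝ, x ∈ Set.Ioi (0:ℝ) ∧ dist x 0 < 1 / (n + 1) ∧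
      δ ≤ dist (z x) zbar := by
    intro n
    obtain ⟨x, hx1, hx2, hx3⟩ := hbad (1 / (n + 1)) (by positivity)
    exact ⟨x, hx1, hx2, hx3⟩
  choose e he1 he2 he3 using hseq
  have hepos : ∀ n, 0 < e n := fun n => he1 n
  have helt : ∀ n, e n < 1 / (n + 1) := by
    intro n
    have := he2 n
    rwa [Real.dist_eq, sub_zero, abs_of_pos (hepos n)] at this
  have he0 : Tendsto e atTop (nhds (0:ℝ)) := by
    apply squeeze_zero (fun n => (hepos n).le) (fun n => (helt n).le)
    exact tendsto_one_div_add_atTop_nhds_zero_nat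
  -- compactness
  have hK : IsCompact (Metric.closedBall (0:H) ‖zbar‖) := isCompact_closedBall _ _
  have hmem : ∀ n, z (e n) ∈ Metric.closedBall (0:H) ‖zbar‖ := by
    intro n
    rw [Metric.mem_closedBall, dist_zero_right]
    exact hnorm_le (e n) (hepos n)
  obtain ⟨zs, hzsK, φ, hφ, hφtend⟩ := hK.tendsto_subseq hmem
  have heφ0 : Tendsto (fun n => e (φ n)) atTop (nhds (0:ℝ)) :=
    he0.comp hφ.tendsto_atTop
  -- Φ zs = 0
  have hΦzs : Φ zs = 0 := by
    have h1 : Tendsto (fun n => Φ (z (e (φ n)))) atTop (nhds (Φ zs)) :=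
      (hcont.tendsto zs).comp hφtend
    have h2 : Tendsto (fun n => Φ (z (e (φ n)))) atTop (nhds (0:ℝ)) := by
      apply squeeze_zero (fun n => hnonneg _) (fun n => hΦ_le _ (hepos (φ n)))
      have : Tendsto (fun x : ℝ => x / 2 * ‖zbar‖ ^ 2) (nhds 0) (nhds (0 / 2 * ‖zbar‖ ^ 2)) := by
        exact ((continuous_id.div_const 2).mul continuous_const).tendsto 0
      simpa [Function.comp_def] using this.comp heφ0
    exact tendsto_nhds_unique h1 h2
  have hzsΩ : zs ∈ Ω := by rw [hΩ]; exact hΦzs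
  -- zs has minimal norm, hence zs = zbar
  have hzs_le : ‖zs‖ ≤ ‖zbar‖ := by
    rw [Metric.mem_closedBall, dist_zero_right] at hzsK; exact hzsK
  have hzs_ge : ‖zbar‖ ≤ ‖zs‖ := hmin zs hzsΩ
  have hmid : (1/2 : ℝ) • zs + (1/2 : ℝ) • zbar ∈ Ω :=
    hΩconv hzsΩ hzbar (by norm_num) (by norm_num) (by norm_num)
  have hmidnorm : ‖zbar‖ ≤ ‖(1/2 : ℝ) • zs + (1/2 : ℝ) • zbar‖ := hmin _ hmid
  have hzs_eq : zs = zbar := by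
    have hpar := parallelogram_law_with_norm ℝ zs zbar
    have hm : ‖(1/2 : ℝ) • zs + (1/2 : ℝ) • zbar‖ = ‖zs + zbar‖ / 2 := by
      rw [← smul_add, norm_smul]
      simp [abs_of_nonneg]
      ring
    rw [hm] at hmidnorm
    have hsub : ‖zs - zbar‖ = 0 := by
      nlinarith [norm_nonneg (zs - zbar), norm_nonneg (zs + zbar), norm_nonneg zbar,
        norm_nonneg zs]
    rwa [norm_sub_eq_zero_iff] at hsub
  -- contradiction
  have hdist : Tendsto (fun n => dist (z (e (φ n))) zbar) atTop (nhds (dist zs zbar)) :=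
    (Continuous.tendsto (continuous_id.dist continuous_const) zs).comp hφtend
  have : δ ≤ dist zs zbar := ge_of_tendsto hdist (Eventually.of_forall fun n => he3 (φ n))
  rw [hzs_eq, dist_self] at this
  linarith
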